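/- arXiv:2412.20676 — 2 statements merged into one kernel-verified Lean document; each statement's English description precedes it below -/
import Mathlib

section
/- Let Φ, Ψ : (A,ε) → (B,μ) be pointed cdg-algebra maps over a ℚ-algebra R that are cdga-homotopic. Then the induced maps on linearized homology are equal: LΦ = LΨ as maps LH(A,ε) → LH(B,μ). -/
set_option linter.unusedSectionVars false
set_option linter.unnecessarySeqFocus false
set_option maxHeartbeats 800000

/-! # Commutative differential graded algebras: basic notions -/

noncomputable section

/-- `Φ` is a quasi-isomorphism (weak equivalence) of complexes of `R`-modules:
it induces an isomorphism on homology.  Stated elementwise: surjectivity and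
injectivity on homology. -/
def IsQuasiIso (R : Type) [CommRing R] (A B : Type) [AddCommGroup A] [Module R A]
    [AddCommGroup B] [Module R B]
    (dA : A →ₗ[R] A) (dB : B →ₗ[R] B) (Φ : A → B) : Prop :=
  (∀ y : B, dB y = 0 → ∃ x : A, dA x = 0 ∧ ∃ b : B, Φ x = y + dB b) ∧
  (∀ x : A, dA x = 0 → (∃ b : B, Φ x = dB b) → ∃ a : A, x = dA a)

section Core

variable (R : Type) [CommRing R] [Algebra ℚ R]
variable (ι : Type) [CommRing ι] [DecidableEq ι] (σ : ι →+ ZMod 2)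

section GC

variable (A : Type) [Ring A] [Algebra R A]

/-- A (ℤ/2m- or ℤ-)graded, graded-commutative unital `R`-algebra structure with
grading `𝒜` and parity map `σ` (Koszul sign rule). -/
structure IsGCAlg (𝒜 : ι → Submodule R A) : Prop where
  one_mem : (1 : A) ∈ 𝒜 0
  mul_mem : ∀ ⦃i j : ι⦄ ⦃x y : A⦄, x ∈ 𝒜 i → y ∈ 𝒜 j → x * y ∈ 𝒜 (i + j)
  internal : DirectSum.IsInternal 𝒜
  gcomm : ∀ ⦃i j : ι⦄ ⦃x y : A⦄, x ∈ 𝒜 i → y ∈ 𝒜 j →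
    x * y = if σ i = 1 ∧ σ j = 1 then -(y * x) else y * x

/-- A commutative differential graded algebra: graded-commutative algebra
with an `R`-linear differential of degree `1`, squaring to zero and
satisfying the graded Leibniz rule. -/
structure IsCDGA (𝒜 : ι → Submodule R A) (d : A →ₗ[R] A) : Prop where
  toIsGCAlg : IsGCAlg R ι σ A 𝒜
  d_mem : ∀ ⦃i : ι⦄ ⦃x : A⦄, x ∈ 𝒜 i → d x ∈ 𝒜 (i + 1)
  d_sq : ∀ x : A, d (d x) = 0
  leibniz : ∀ ⦃i : ι⦄ ⦃x : A⦄, x ∈ 𝒜 i → ∀ y : A,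
    d (x * y) = d x * y + (if σ i = 1 then -(x * d y) else x * d y)

/-- An augmentation of a cdg-algebra: a unital algebra map `ε : A → R`
which is a map of dg-algebras to `R` with trivial differential and grading. -/
structure IsAug (𝒜 : ι → Submodule R A) (d : A →ₗ[R] A) (ε : A →ₐ[R] R) : Prop where
  d_van : ∀ x : A, ε (d x) = 0
  graded : ∀ ⦃i : ι⦄, i ≠ 0 → ∀ ⦃x : A⦄, x ∈ 𝒜 i → ε x = 0

/-- The augmentation ideal `A_⋆ = ker ε`. -/
def augKer (ε : A →ₐ[R] R) : Submodule R A := LinearMap.ker ε.toLinearMap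

/-- The `R`-submodule generated by products of two elements of `N`. -/
def sqSpan (N : Submodule R A) : Submodule R A :=
  Submodule.span R {a : A | ∃ x ∈ N, ∃ y ∈ N, a = x * y}

/-- `A_⋆² ⊆ A`. The linearized complex is `LC(A,ε) = A_⋆/A_⋆²`. -/
def augKerSq (ε : A →ₐ[R] R) : Submodule R A := sqSpan R A (augKer R A ε)

end GC

section Hom

variable (A B : Type) [Ring A] [Algebra R A] [Ring B] [Algebra R B]

/-- A map of cdg-algebras: an algebra map preserving the grading and
commuting with the differentials. -/
structure IsDGAHom (𝒜 : ι → Submodule R A) (dA : A →ₗ[R] A)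
    (ℬ : ι → Submodule R B) (dB : B →ₗ[R] B) (Φ : A →ₐ[R] B) : Prop where
  grade : ∀ ⦃i : ι⦄ ⦃x : A⦄, x ∈ 𝒜 i → Φ x ∈ ℬ i
  comm_d : ∀ x : A, Φ (dA x) = dB (Φ x)

/-- The linearization `LΦ : LC(A,ε) → LC(B,μ)` of `Φ` is a quasi-isomorphism,
stated elementwise in the linearized complexes `A_⋆/A_⋆²`, `B_⋆/B_⋆²`:
an `L`-cycle is an `x ∈ A_⋆` with `dx ∈ A_⋆²`. -/
def IsLQuasiIso (dA : A →ₗ[R] A) (dB : B →ₗ[R] B)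
    (ε : A →ₐ[R] R) (μ : B →ₐ[R] R) (Φ : A → B) : Prop :=
  (∀ y ∈ augKer R B μ, dB y ∈ augKerSq R B μ →
      ∃ x ∈ augKer R A ε, dA x ∈ augKerSq R A ε ∧
        ∃ b ∈ augKer R B μ, Φ x - y - dB b ∈ augKerSq R B μ) ∧
  (∀ x ∈ augKer R A ε, dA x ∈ augKerSq R A ε →
      (∃ b ∈ augKer R B μ, Φ x - dB b ∈ augKerSq R B μ) →
      ∃ a ∈ augKer R A ε, x - dA a ∈ augKerSq R A ε)

end Hom

section Sullivan

variable (A : Type) [Ring A] [Algebra R A]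

/-- A Sullivan structure on a cdg-algebra `A`: an isomorphism, as a graded
algebra, with the free graded-commutative algebra `SV` on a free graded
`R`-module `V = ⊕_{i ∈ I} M_i`, indexed by a well-ordered set `I`, with
`d M_i ⊆ S(⊕_{j<i} M_j)`.  The data is recorded by the generators `g s`
(a homogeneous basis of `V`, with index `idx s ∈ I` and degree `deg s`);
freeness is recorded by the universal property of the free
graded-commutative algebra on these generators. -/
structure SullivanStruct (𝒜 : ι → Submodule R A) (d : A →ₗ[R] A) where
  Idx : Type
  [linOrd : LinearOrder Idx]
  wf : WellFounded ((· < ·) : Idx → Idx → Prop)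
  Gen : Type
  idx : Gen → Idx
  deg : Gen → ι
  g : Gen → A
  g_mem : ∀ s, g s ∈ 𝒜 (deg s)
  free : ∀ (B : Type) [Ring B] [Algebra R B] (ℬ : ι → Submodule R B),
      IsGCAlg R ι σ B ℬ → ∀ f : Gen → B, (∀ s, f s ∈ ℬ (deg s)) →
      ∃! F : A →ₐ[R] B, (∀ ⦃i : ι⦄ ⦃x : A⦄, x ∈ 𝒜 i → F x ∈ ℬ i) ∧ ∀ s, F (g s) = f s
  filt : ∀ s, d (g s) ∈ Algebra.adjoin R (g '' {s' | idx s' < idx s})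

/-- A cdg-algebra is Sullivan if it admits a Sullivan structure. -/
def IsSullivan (𝒜 : ι → Submodule R A) (d : A →ₗ[R] A) : Prop :=
  Nonempty (SullivanStruct R ι σ A 𝒜 d)

/-- Weak equivalence of augmentations `ε ≃ μ` of a cdg-algebra `A`:
a weak equivalence of pointed cdg-algebras `(A,ε) → (A,μ)`. -/
def WeakEquivAug (𝒜 : ι → Submodule R A) (d : A →ₗ[R] A) (ε μ : A →ₐ[R] R) : Prop :=
  ∃ Φ : A →ₐ[R] A, IsDGAHom R ι A A 𝒜 d 𝒜 d Φ ∧ μ.comp Φ = ε ∧ IsQuasiIso R A A d d Φ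

end Sullivan

end Core

/-- A bundled cdg-algebra over `R` (graded by `ι` with parity `σ`). -/
structure CDGApack (R : Type) [CommRing R] [Algebra ℚ R]
    (ι : Type) [CommRing ι] [DecidableEq ι] (σ : ι →+ ZMod 2) where
  A : Type
  [ringA : Ring A]
  [algA : Algebra R A]
  gr : ι → Submodule R A
  d : A →ₗ[R] A
  isCDGA : IsCDGA R ι σ A gr d

attribute [instance] CDGApack.ringA CDGApack.algA

/-- A ℤ-graded algebra is `k`-positively generated if it is generated, as a
unital algebra, by elements of degree strictly larger than `k`. -/
def IsPosGen (R : Type) [CommRing R] (A : Type) [Ring A] [Algebra R A]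
    (𝒜 : ℤ → Submodule R A) (k : ℤ) : Prop :=
  Algebra.adjoin R (⋃ i > k, ((𝒜 i : Submodule R A) : Set A)) = ⊤

/-- The parity map `ℤ/2m → ℤ/2`. -/
def sigmaM (m : ℕ) : ZMod (2 * m) →+ ZMod 2 :=
  (ZMod.castHom (dvd_mul_right 2 m) (ZMod 2)).toAddMonoidHom

/-- The parity map `ℤ → ℤ/2`. -/
def sigmaZ : ℤ →+ ZMod 2 := (Int.castRingHom (ZMod 2)).toAddMonoidHom

end

/-! # The interval algebra and the path cdg-algebra -/

noncomputable section PathSection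

variable (R : Type) [CommRing R] [Algebra ℚ R]
variable (B : Type) [Ring B] [Algebra R B]

/-- The ambient carrier `B ⊗ P = B[s] ⊕ B[s]·ds` of the path algebra of `B`,
where `P = R[s] ⊕ R[s]·ds` is the interval algebra.  An element
`(f, g)` represents `Σ f_m ⊗ s^m + Σ g_n ⊗ s^n ds`.  The multiplication uses
the Koszul sign rule, implemented through the parity involution
`ω : B → B`, `ω(x) = (-1)^{|x|} x`. -/
def PathC (_ω : B →ₐ[R] B) : Type := Polynomial B × Polynomial B

variable (ω : B →ₐ[R] B)

namespace PathC

instance : AddCommGroup (PathC R B ω) :=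
  inferInstanceAs (AddCommGroup (Polynomial B × Polynomial B))

instance : Module R (PathC R B ω) :=
  inferInstanceAs (Module R (Polynomial B × Polynomial B))

variable {R B ω}

/-- The `B[s]` component. -/
def pp (x : PathC R B ω) : Polynomial B := Prod.fst x

/-- The `B[s]·ds` component. -/
def qq (x : PathC R B ω) : Polynomial B := Prod.snd x

/-- Build an element from the two components. -/
def mk (f g : Polynomial B) : PathC R B ω := (f, g)

@[ext] lemma ext {x y : PathC R B ω} (h1 : pp x = pp y) (h2 : qq x = qq y) : x = y :=
  Prod.ext h1 h2

@[simp] lemma pp_mk (f g : Polynomial B) : pp (mk f g : PathC R B ω) = f := rfl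
@[simp] lemma qq_mk (f g : Polynomial B) : qq (mk f g : PathC R B ω) = g := rfl
@[simp] lemma pp_add (x y : PathC R B ω) : pp (x + y) = pp x + pp y := rfl
@[simp] lemma qq_add (x y : PathC R B ω) : qq (x + y) = qq x + qq y := rfl
@[simp] lemma pp_zero : pp (0 : PathC R B ω) = 0 := rfl
@[simp] lemma qq_zero : qq (0 : PathC R B ω) = 0 := rfl
@[simp] lemma pp_neg (x : PathC R B ω) : pp (-x) = -pp x := rfl
@[simp] lemma qq_neg (x : PathC R B ω) : qq (-x) = -qq x := rfl
@[simp] lemma pp_sub (x y : PathC R B ω) : pp (x - y) = pp x - pp y := rfl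
@[simp] lemma qq_sub (x y : PathC R B ω) : qq (x - y) = qq x - qq y := rfl
@[simp] lemma pp_smul (r : R) (x : PathC R B ω) : pp (r • x) = r • pp x := rfl
@[simp] lemma qq_smul (r : R) (x : PathC R B ω) : qq (r • x) = r • qq x := rfl

variable (R B ω)

instance : One (PathC R B ω) := ⟨mk 1 0⟩

instance : Mul (PathC R B ω) :=
  ⟨fun x y => mk (pp x * pp y) (pp x * qq y + qq x * (pp y).map ω.toRingHom)⟩

variable {R B ω}

@[simp] lemma pp_one : pp (1 : PathC R B ω) = 1 := rfl
@[simp] lemma qq_one : qq (1 : PathC R B ω) = 0 := rfl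
@[simp] lemma pp_mul (x y : PathC R B ω) : pp (x * y) = pp x * pp y := rfl
@[simp] lemma qq_mul (x y : PathC R B ω) :
    qq (x * y) = pp x * qq y + qq x * (pp y).map ω.toRingHom := rfl

lemma pmap_smul (r : R) (p : Polynomial B) :
    (r • p).map ω.toRingHom = r • p.map ω.toRingHom := by
  ext n
  simp [Polynomial.coeff_map, Polynomial.coeff_smul, map_smul]

variable (R B ω)

instance instRing : Ring (PathC R B ω) :=
  { (inferInstanceAs (AddCommGroup (PathC R B ω)) : AddCommGroup (PathC R B ω)),
    (inferInstanceAs (One (PathC R B ω)) : One (PathC R B ω)),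
    (inferInstanceAs (Mul (PathC R B ω)) : Mul (PathC R B ω)) with
    mul_assoc := by
      intro a b c
      apply ext <;>
        simp [mul_assoc, mul_add, add_mul, Polynomial.map_mul] <;> abel
    one_mul := by intro a; apply ext <;> simp
    mul_one := by intro a; apply ext <;> simp
    left_distrib := by
      intro a b c
      apply ext <;> simp [mul_add, add_mul, Polynomial.map_add] <;> abel
    right_distrib := by
      intro a b c
      apply ext <;> simp [mul_add, add_mul, Polynomial.map_add] <;> abel
    zero_mul := by intro a; apply ext <;> simp
    mul_zero := by intro a; apply ext <;> simp }

instance : Algebra R (PathC R B ω) :=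
  Algebra.ofModule
    (by
      intro r x y
      apply ext <;> simp [smul_mul_assoc])
    (by
      intro r x y
      apply ext
      · simp [mul_smul_comm]
      · show pp x * (r • qq y) + qq x * ((r • pp y).map ω.toRingHom) =
          r • (pp x * qq y + qq x * (pp y).map ω.toRingHom)
        rw [pmap_smul, smul_add, mul_smul_comm, mul_smul_comm] )

end PathC

end PathSection

noncomputable section PathSection2

namespace PathC

variable (R : Type) [CommRing R] [Algebra ℚ R]
variable (ι : Type) [CommRing ι] [DecidableEq ι]
variable (B : Type) [Ring B] [Algebra R B] (ω : B →ₐ[R] B)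

/-- Applying a linear map to each coefficient of a polynomial. -/
def coeffMap (f : B →ₗ[R] B) : Polynomial B →ₗ[R] Polynomial B where
  toFun p := ⟨AddMonoidAlgebra.ofCoeff (p.toFinsupp.coeff.mapRange f f.map_zero)⟩
  map_add' p q := by
    rcases p with ⟨p⟩; rcases q with ⟨q⟩
    simp only [← Polynomial.ofFinsupp_add]
    congr 1
    exact congrArg AddMonoidAlgebra.ofCoeff (Finsupp.mapRange_add (fun a b => f.map_add a b) p.coeff q.coeff)
  map_smul' r p := by
    rcases p with ⟨p⟩
    simp only [← Polynomial.ofFinsupp_smul]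
    congr 1
    exact congrArg AddMonoidAlgebra.ofCoeff (Finsupp.mapRange_smul r p.coeff (fun a => f.map_smul r a))

@[simp] lemma coeff_coeffMap (f : B →ₗ[R] B) (p : Polynomial B) (n : ℕ) :
    (coeffMap R B f p).coeff n = f (p.coeff n) := by
  rcases p with ⟨p⟩
  rfl

/-- The differential of the path algebra `PB ⊆ B ⊗ P`:
`d(x ⊗ sᵐ) = dx ⊗ sᵐ + (-1)^{|x|} m · x ⊗ s^{m-1} ds` and
`d(y ⊗ sⁿ ds) = dy ⊗ sⁿ ds`, the sign being implemented by `ω`. -/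
def pathD (dB : B →ₗ[R] B) : PathC R B ω →ₗ[R] PathC R B ω where
  toFun x := mk (coeffMap R B dB (pp x))
    (coeffMap R B dB (qq x) + Polynomial.derivative ((pp x).map ω.toRingHom))
  map_add' x y := by
    apply ext <;> simp [Polynomial.map_add] <;> abel
  map_smul' r x := by
    apply ext
    · ext n
      simp [Polynomial.coeff_smul, map_smul]
    · ext n
      simp [Polynomial.coeff_smul, Polynomial.coeff_derivative, Polynomial.coeff_map,
        map_smul, smul_mul_assoc, smul_add]

/-- The grading of the path algebra: `s` has degree `0` and `ds` degree `1`, so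
`deg (x ⊗ sᵐ) = |x|` and `deg (y ⊗ sⁿ ds) = |y| + 1`. -/
def pathGr (ℬ : ι → Submodule R B) (i : ι) : Submodule R (PathC R B ω) where
  carrier := {x | (∀ n, (pp x).coeff n ∈ ℬ i) ∧ ∀ n, (qq x).coeff n ∈ ℬ (i - 1)}
  add_mem' := by
    rintro x y ⟨hx1, hx2⟩ ⟨hy1, hy2⟩
    constructor
    · intro n; rw [pp_add, Polynomial.coeff_add]; exact add_mem (hx1 n) (hy1 n)
    · intro n; rw [qq_add, Polynomial.coeff_add]; exact add_mem (hx2 n) (hy2 n)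
  zero_mem' := by
    constructor <;> intro n <;> simp
  smul_mem' := by
    rintro r x ⟨hx1, hx2⟩
    constructor
    · intro n; rw [pp_smul, Polynomial.coeff_smul]; exact Submodule.smul_mem _ _ (hx1 n)
    · intro n; rw [qq_smul, Polynomial.coeff_smul]; exact Submodule.smul_mem _ _ (hx2 n)

/-- The augmentation `Pμ : PB → R`, projection to the `R`-summand. -/
def pathAug (μ : B →ₐ[R] R) : PathC R B ω →ₐ[R] R where
  toFun x := μ ((pp x).coeff 0)
  map_one' := by simp
  map_mul' x y := by simp
  map_zero' := by simp
  map_add' x y := by simp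
  commutes' r := by
    show μ ((pp (r • (1 : PathC R B ω))).coeff 0) = _
    rw [pp_smul, pp_one, Polynomial.coeff_smul, Polynomial.coeff_one_zero]
    simp [Algebra.algebraMap_eq_smul_one]

/-- Evaluation `Π₀ : PB → B` at `s = 0`, `ds = 0`. -/
def pathPi0 : PathC R B ω →ₐ[R] B where
  toFun x := (pp x).coeff 0
  map_one' := by simp
  map_mul' x y := by simp
  map_zero' := by simp
  map_add' x y := by simp
  commutes' r := by
    show (pp (r • (1 : PathC R B ω))).coeff 0 = _
    rw [pp_smul, pp_one, Polynomial.coeff_smul, Polynomial.coeff_one_zero]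
    simp [Algebra.algebraMap_eq_smul_one]

/-- The sum of the coefficients of a polynomial, as a ring homomorphism
(evaluation at the central element `1`). -/
def evalOneHom : Polynomial B →+* B :=
  Polynomial.eval₂RingHom' (RingHom.id B) 1 (fun a => Commute.one_right a)

/-- Evaluation `Π₁ : PB → B` at `s = 1`, `ds = 0`. -/
def pathPi1 : PathC R B ω →ₐ[R] B where
  toFun x := evalOneHom B (pp x)
  map_one' := by simp
  map_mul' x y := by simp
  map_zero' := by simp
  map_add' x y := by simp
  commutes' r := by
    have h1 : pp ((algebraMap R (PathC R B ω)) r) = Polynomial.C (algebraMap R B r) := by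
      show r • (1 : Polynomial B) = _
      rw [← Algebra.algebraMap_eq_smul_one, Polynomial.algebraMap_apply]
    rw [show (algebraMap R (PathC R B ω)) r = r • 1 from rfl] at h1 ⊢
    show evalOneHom B (pp ((r • 1 : PathC R B ω))) = _
    rw [h1]
    simp [evalOneHom]

/-- The inclusion `B → B ⊗ P`, `x ↦ x ⊗ 1`. -/
def pathInc : B →ₐ[R] PathC R B ω where
  toFun x := mk (Polynomial.C x) 0
  map_one' := by apply ext <;> simp
  map_mul' x y := by apply ext <;> simp
  map_zero' := by apply ext <;> simp
  map_add' x y := by apply ext <;> simp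
  commutes' r := by
    apply ext
    · show Polynomial.C (algebraMap R B r) = r • (1 : Polynomial B)
      rw [← Polynomial.algebraMap_apply, Algebra.algebraMap_eq_smul_one]
    · show (0 : Polynomial B) = r • (0 : Polynomial B)
      simp

/-- Membership in the path algebra `PB = R ⊕ (B_⋆ ⊗ P) ⊆ B ⊗ P` of a pointed
cdg-algebra `(B, μ)`. -/
def memPB (μ : B →ₐ[R] R) (x : PathC R B ω) : Prop :=
  (∀ n, n ≠ 0 → (pp x).coeff n ∈ augKer R B μ) ∧ ∀ n, (qq x).coeff n ∈ augKer R B μ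

/-- The augmentation ideal `(PB)_⋆ = ker Pμ ⊆ PB = R ⊕ (B_⋆ ⊗ P)`, realized as a
submodule of the ambient algebra `B ⊗ P`: all coefficients lie in `B_⋆ = ker μ`. -/
def pathAugKer (μ : B →ₐ[R] R) : Submodule R (PathC R B ω) where
  carrier := {x | (∀ n, (pp x).coeff n ∈ augKer R B μ) ∧ ∀ n, (qq x).coeff n ∈ augKer R B μ}
  add_mem' := by
    rintro x y ⟨hx1, hx2⟩ ⟨hy1, hy2⟩
    constructor
    · intro n; rw [pp_add, Polynomial.coeff_add]; exact add_mem (hx1 n) (hy1 n)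
    · intro n; rw [qq_add, Polynomial.coeff_add]; exact add_mem (hx2 n) (hy2 n)
  zero_mem' := by
    constructor <;> intro n <;> simp
  smul_mem' := by
    rintro r x ⟨hx1, hx2⟩
    constructor
    · intro n; rw [pp_smul, Polynomial.coeff_smul]; exact Submodule.smul_mem _ _ (hx1 n)
    · intro n; rw [qq_smul, Polynomial.coeff_smul]; exact Submodule.smul_mem _ _ (hx2 n)

/-- `(PB)_⋆²`, realized in the ambient algebra `B ⊗ P`. -/
def pathAugKerSq (μ : B →ₐ[R] R) : Submodule R (PathC R B ω) :=
  sqSpan R (PathC R B ω) (pathAugKer R B ω μ)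

end PathC

/-- `ω` is the parity involution of the graded algebra `(B, ℬ)`:
`ω x = (-1)^{|x|} x` on homogeneous elements. -/
def IsParityOp {R : Type} [CommRing R] [Algebra ℚ R] (ι : Type) [CommRing ι]
    [DecidableEq ι] (σ : ι →+ ZMod 2) (B : Type) [Ring B] [Algebra R B]
    (ℬ : ι → Submodule R B) (ω : B →ₐ[R] B) : Prop :=
  ∀ ⦃i : ι⦄ ⦃x : B⦄, x ∈ ℬ i → ω x = if σ i = 1 then -x else x

/-- A cdga-homotopy `H : Φ ≃ Ψ` between pointed cdg-algebra maps
`Φ, Ψ : (A, ε) → (B, μ)`: a pointed map of cdg-algebras `H : A → PB` to the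
path cdg-algebra `PB = R ⊕ (B_⋆ ⊗ P)` of `(B, μ)` with `Π₀ ∘ H = Φ` and
`Π₁ ∘ H = Ψ`. -/
structure IsHomotopy {R : Type} [CommRing R] [Algebra ℚ R] (ι : Type) [CommRing ι]
    [DecidableEq ι] (A : Type) [Ring A] [Algebra R A] (B : Type) [Ring B] [Algebra R B]
    (𝒜 : ι → Submodule R A) (dA : A →ₗ[R] A) (ε : A →ₐ[R] R)
    (ℬ : ι → Submodule R B) (dB : B →ₗ[R] B) (μ : B →ₐ[R] R) (ω : B →ₐ[R] B)
    (Φ Ψ : A →ₐ[R] B) (H : A →ₐ[R] PathC R B ω) : Prop where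
  grade : ∀ ⦃i : ι⦄ ⦃x : A⦄, x ∈ 𝒜 i → H x ∈ PathC.pathGr R ι B ω ℬ i
  comm_d : ∀ x : A, H (dA x) = PathC.pathD R B ω dB (H x)
  pointed : ∀ x : A, PathC.pathAug R B ω μ (H x) = ε x
  mem : ∀ x : A, PathC.memPB R B ω μ (H x)
  pi0 : ∀ x : A, PathC.pathPi0 R B ω (H x) = Φ x
  pi1 : ∀ x : A, PathC.pathPi1 R B ω (H x) = Ψ x

end PathSection2

/-!
Write `H x = Σ fₙ sⁿ + Σ gₙ sⁿ ds`, so that `Ψ x - Φ x = Σ f_{n+1}`. Since `H` is a dg-map,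
`d (H x) = H (d x)` lies in `(PB)_⋆²` when `x` is a linearized cycle, and its `sⁿ ds`-coefficient
says `d gₙ + (n + 1) ω(f_{n+1}) ∈ B_⋆²`. The parity involution `ω` anticommutes with `d` and
preserves `B_⋆²`, and `n + 1` is invertible because `ℚ ⊆ R`; hence `f_{n+1} ≡ d (ω gₙ / (n + 1))`
modulo `B_⋆²`. Summing over `n`, `Ψ x - Φ x` is a linearized boundary of the fibre integral
`∫₀¹ H x = Σ ω gₙ / (n + 1)`.
-/

section Linearized

variable {R : Type} [CommRing R] {A B : Type} [Ring A] [Algebra R A] [Ring B] [Algebra R B]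

lemma sqSpan_eq_mul (N : Submodule R A) : sqSpan R A N = N * N := by
  rw [Submodule.mul_eq_span_mul_set, sqSpan]
  congr 1
  ext a
  simp only [Set.mem_ofPred_eq, Set.mem_mul, SetLike.mem_coe, eq_comm]

lemma map_mem_sqSpan (F : A →ₐ[R] B) {N : Submodule R A} {M : Submodule R B}
    (hF : ∀ x ∈ N, F x ∈ M) {x : A} (hx : x ∈ sqSpan R A N) : F x ∈ sqSpan R B M := by
  have hNM : N.map F.toLinearMap ≤ M := Submodule.map_le_iff_le_comap.2 hF
  rw [sqSpan_eq_mul] at hx ⊢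
  refine mul_le_mul' hNM hNM ?_
  rw [← Submodule.map_mul]
  exact Submodule.mem_map_of_mem hx

lemma map_mem_augKer {ε : A →ₐ[R] R} {μ : B →ₐ[R] R} {F : A →ₐ[R] B} (hF : μ.comp F = ε)
    {x : A} (hx : x ∈ augKer R A ε) : F x ∈ augKer R B μ := by
  change μ (F x) = 0
  rw [← AlgHom.comp_apply, hF]
  exact hx

lemma map_mem_augKerSq {ε : A →ₐ[R] R} {μ : B →ₐ[R] R} {F : A →ₐ[R] B} (hF : μ.comp F = ε)
    {x : A} (hx : x ∈ augKerSq R A ε) : F x ∈ augKerSq R B μ :=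
  map_mem_sqSpan F (fun _ => map_mem_augKer hF) hx

end Linearized

lemma DirectSum.IsInternal.linearMap_ext {R ι A M : Type*} [Ring R] [DecidableEq ι]
    [AddCommGroup A] [Module R A] [AddCommGroup M] [Module R M] {𝒜 : ι → Submodule R A}
    (h : DirectSum.IsInternal 𝒜) {f g : A →ₗ[R] M} (hfg : ∀ i, ∀ x ∈ 𝒜 i, f x = g x) :
    f = g := by
  have htop : ⊤ ≤ LinearMap.eqLocus f g :=
    h.submodule_iSup_eq_top ▸ iSup_le fun i x hx => hfg i x hx
  exact LinearMap.ext fun x => htop Submodule.mem_top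

namespace IsParityOp

variable {R : Type} [CommRing R] [Algebra ℚ R] {ι : Type} [CommRing ι] [DecidableEq ι]
  {σ : ι →+ ZMod 2} {B : Type} [Ring B] [Algebra R B] {ℬ : ι → Submodule R B}
  {dB : B →ₗ[R] B} {ω : B →ₐ[R] B}

lemma involutive (hℬ : DirectSum.IsInternal ℬ) (hω : IsParityOp ι σ B ℬ ω) :
    Function.Involutive ω := by
  have h : ω.toLinearMap ∘ₗ ω.toLinearMap = LinearMap.id := by
    refine hℬ.linearMap_ext fun i y hy => ?_
    simp only [LinearMap.coe_comp, Function.comp_apply, AlgHom.toLinearMap_apply,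
      LinearMap.id_coe, id_eq, hω hy]
    split_ifs with h <;> simp [hω hy, h]
  exact fun y => LinearMap.congr_fun h y

lemma aug_comp {μ : B →ₐ[R] R} (hℬ : DirectSum.IsInternal ℬ) (hμ : IsAug R ι B ℬ dB μ)
    (hω : IsParityOp ι σ B ℬ ω) : μ.comp ω = μ := by
  have h : μ.toLinearMap ∘ₗ ω.toLinearMap = μ.toLinearMap := by
    refine hℬ.linearMap_ext fun i y hy => ?_
    simp only [LinearMap.coe_comp, Function.comp_apply, AlgHom.toLinearMap_apply, hω hy]
    by_cases hi : i = 0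
    · simp [hi]
    · split_ifs <;> simp [hμ.graded hi hy]
  exact AlgHom.ext fun y => LinearMap.congr_fun h y

lemma map_d (hB : IsCDGA R ι σ B ℬ dB) (hσ : σ 1 = 1) (hω : IsParityOp ι σ B ℬ ω) (y : B) :
    ω (dB y) = -dB (ω y) := by
  have h : ω.toLinearMap ∘ₗ dB = -(dB ∘ₗ ω.toLinearMap) := by
    refine hB.toIsGCAlg.internal.linearMap_ext fun i y hy => ?_
    simp only [LinearMap.coe_comp, Function.comp_apply, AlgHom.toLinearMap_apply,
      LinearMap.neg_apply, hω hy, hω (hB.d_mem hy), map_add, hσ]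
    obtain h | h : σ i = 0 ∨ σ i = 1 := by generalize σ i = a; revert a; decide
    all_goals simp [h]
  exact LinearMap.congr_fun h y

end IsParityOp

lemma algebraMap_inv_smul_natCast_add_one (R : Type) [CommRing R] [Algebra ℚ R]
    {B : Type} [Ring B] [Algebra R B] (n : ℕ) :
    algebraMap ℚ R ((n : ℚ) + 1)⁻¹ • ((n : B) + 1) = 1 := by
  have h : ((n : B) + 1) = algebraMap R B (algebraMap ℚ R ((n : ℚ) + 1)) := by simp
  rw [h, Algebra.smul_def, ← map_mul, ← map_mul, inv_mul_cancel₀ (Nat.cast_add_one_ne_zero n),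
    map_one, map_one]

namespace PathC

variable {R : Type} [CommRing R] [Algebra ℚ R] {B : Type} [Ring B] [Algebra R B]
  {ω : B →ₐ[R] B} {μ : B →ₐ[R] R} {dB : B →ₗ[R] B}

lemma coeff_qq_pathD (z : PathC R B ω) (n : ℕ) :
    (qq (pathD R B ω dB z)).coeff n =
      dB ((qq z).coeff n) + ω ((pp z).coeff (n + 1)) * (n + 1) := by
  simp [pathD, Polynomial.coeff_derivative]

lemma pathPi1_sub_pathPi0 (z : PathC R B ω) :
    pathPi1 R B ω z - pathPi0 R B ω z =
      ∑ n ∈ Finset.range (pp z).natDegree, (pp z).coeff (n + 1) := by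
  change Polynomial.eval₂ (RingHom.id B) 1 (pp z) - (pp z).coeff 0 = _
  rw [Polynomial.eval₂_eq_sum_range, Finset.sum_range_succ']
  simp

lemma coeff_qq_mem_augKerSq (hμω : μ.comp ω = μ) {z : PathC R B ω}
    (hz : z ∈ pathAugKerSq R B ω μ) (n : ℕ) : (qq z).coeff n ∈ augKerSq R B μ := by
  induction hz using Submodule.span_induction generalizing n with
  | mem a ha =>
    obtain ⟨u, hu, v, hv, rfl⟩ := ha
    rw [qq_mul, Polynomial.coeff_add, Polynomial.coeff_mul, Polynomial.coeff_mul]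
    refine add_mem (Submodule.sum_mem _ fun c _ => ?_) (Submodule.sum_mem _ fun c _ => ?_)
    · exact Submodule.subset_span ⟨_, hu.1 c.1, _, hv.2 c.2, rfl⟩
    · rw [Polynomial.coeff_map]
      exact Submodule.subset_span ⟨_, hu.2 c.1, _, map_mem_augKer hμω (hv.1 c.2), rfl⟩
  | zero => simp
  | add a b _ _ ha hb => simpa using add_mem (ha n) (hb n)
  | smul r a _ ha => simpa using Submodule.smul_mem _ r (ha n)

section Stokes

variable (hωω : Function.Involutive ω) (hωd : ∀ y, ω (dB y) = -dB (ω y))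
  (hμω : μ.comp ω = μ)
include hωω hωd hμω

lemma coeff_pp_succ_sub_d_mem_augKerSq {z : PathC R B ω}
    (hdz : pathD R B ω dB z ∈ pathAugKerSq R B ω μ) (n : ℕ) :
    (pp z).coeff (n + 1) - dB (algebraMap ℚ R ((n : ℚ) + 1)⁻¹ • ω ((qq z).coeff n))
      ∈ augKerSq R B μ := by
  have h := map_mem_augKerSq hμω (coeff_qq_mem_augKerSq hμω hdz n)
  rw [coeff_qq_pathD, map_add, map_mul, hωω, hωd, map_add, map_natCast, map_one] at h
  have h' := Submodule.smul_mem _ (algebraMap ℚ R ((n : ℚ) + 1)⁻¹) h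
  rw [smul_add, ← mul_smul_comm, algebraMap_inv_smul_natCast_add_one, mul_one, smul_neg,
    ← map_smul] at h'
  rwa [sub_eq_neg_add]

theorem exists_pathPi1_sub_pathPi0_sub_d_mem_augKerSq {z : PathC R B ω}
    (hz : z ∈ pathAugKer R B ω μ) (hdz : pathD R B ω dB z ∈ pathAugKerSq R B ω μ) :
    ∃ b ∈ augKer R B μ, pathPi1 R B ω z - pathPi0 R B ω z - dB b ∈ augKerSq R B μ := by
  refine ⟨∑ n ∈ Finset.range (pp z).natDegree,
    algebraMap ℚ R ((n : ℚ) + 1)⁻¹ • ω ((qq z).coeff n), ?_, ?_⟩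
  · exact Submodule.sum_mem _ fun n _ =>
      Submodule.smul_mem _ _ (map_mem_augKer hμω (hz.2 n))
  · rw [pathPi1_sub_pathPi0, map_sum, ← Finset.sum_sub_distrib]
    exact Submodule.sum_mem _ fun n _ =>
      coeff_pp_succ_sub_d_mem_augKerSq hωω hωd hμω hdz n

end Stokes

end PathC

lemma sigmaM_one (m : ℕ) : sigmaM m 1 = 1 :=
  map_one (ZMod.castHom (dvd_mul_right 2 m) (ZMod 2))

namespace IsHomotopy

variable {R : Type} [CommRing R] [Algebra ℚ R] {ι : Type} [CommRing ι] [DecidableEq ι]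
  {A : Type} [Ring A] [Algebra R A] {B : Type} [Ring B] [Algebra R B]
  {𝒜 : ι → Submodule R A} {dA : A →ₗ[R] A} {ε : A →ₐ[R] R}
  {ℬ : ι → Submodule R B} {dB : B →ₗ[R] B} {μ : B →ₐ[R] R} {ω : B →ₐ[R] B}
  {Φ Ψ : A →ₐ[R] B} {H : A →ₐ[R] PathC R B ω}

lemma map_mem_pathAugKer (hH : IsHomotopy ι A B 𝒜 dA ε ℬ dB μ ω Φ Ψ H) {x : A}
    (hx : x ∈ augKer R A ε) : H x ∈ PathC.pathAugKer R B ω μ := by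
  refine ⟨fun n => ?_, (hH.mem x).2⟩
  rcases eq_or_ne n 0 with rfl | hn
  · exact (hH.pointed x).trans hx
  · exact (hH.mem x).1 n hn

lemma map_mem_pathAugKerSq (hH : IsHomotopy ι A B 𝒜 dA ε ℬ dB μ ω Φ Ψ H) {x : A}
    (hx : x ∈ augKerSq R A ε) : H x ∈ PathC.pathAugKerSq R B ω μ :=
  map_mem_sqSpan H (fun _ => hH.map_mem_pathAugKer) hx

end IsHomotopy

theorem homotopic_maps_linearized_equal_general
    (R : Type) [CommRing R] [Algebra ℚ R] (m : ℕ)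
    (A : Type) [Ring A] [Algebra R A] (B : Type) [Ring B] [Algebra R B]
    (𝒜 : ZMod (2*m) → Submodule R A) (dA : A →ₗ[R] A)
    (ℬ : ZMod (2*m) → Submodule R B) (dB : B →ₗ[R] B)
    (hB : IsCDGA R (ZMod (2*m)) (sigmaM m) B ℬ dB)
    (ε : A →ₐ[R] R)
    (μ : B →ₐ[R] R) (hμ : IsAug R (ZMod (2*m)) B ℬ dB μ)
    (ω : B →ₐ[R] B) (hω : IsParityOp (ZMod (2*m)) (sigmaM m) B ℬ ω)
    (Φ Ψ : A →ₐ[R] B)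
    (H : A →ₐ[R] PathC R B ω)
    (hH : IsHomotopy (ZMod (2*m)) A B 𝒜 dA ε ℬ dB μ ω Φ Ψ H) :
    ∀ x ∈ augKer R A ε, dA x ∈ augKerSq R A ε →
      ∃ b ∈ augKer R B μ, Φ x - Ψ x - dB b ∈ augKerSq R B μ := by
  intro x hx hdx
  have hℬ := hB.toIsGCAlg.internal
  have hdHx : PathC.pathD R B ω dB (H x) ∈ PathC.pathAugKerSq R B ω μ :=
    hH.comm_d x ▸ hH.map_mem_pathAugKerSq hdx
  obtain ⟨b, hb, hΨΦ⟩ := PathC.exists_pathPi1_sub_pathPi0_sub_d_mem_augKerSq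
    (hω.involutive hℬ) (hω.map_d hB (sigmaM_one m)) (hω.aug_comp hℬ hμ)
    (hH.map_mem_pathAugKer hx) hdHx
  rw [hH.pi0, hH.pi1] at hΨΦ
  refine ⟨-b, neg_mem hb, ?_⟩
  convert neg_mem hΨΦ using 1
  rw [map_neg]
  abel

theorem homotopic_maps_linearized_equal
    (R : Type) [CommRing R] [Algebra ℚ R] (m : ℕ)
    (A : Type) [Ring A] [Algebra R A] (B : Type) [Ring B] [Algebra R B]
    (𝒜 : ZMod (2*m) → Submodule R A) (dA : A →ₗ[R] A)
    (ℬ : ZMod (2*m) → Submodule R B) (dB : B →ₗ[R] B)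
    (hA : IsCDGA R (ZMod (2*m)) (sigmaM m) A 𝒜 dA)
    (hB : IsCDGA R (ZMod (2*m)) (sigmaM m) B ℬ dB)
    (ε : A →ₐ[R] R) (hε : IsAug R (ZMod (2*m)) A 𝒜 dA ε)
    (μ : B →ₐ[R] R) (hμ : IsAug R (ZMod (2*m)) B ℬ dB μ)
    (ω : B →ₐ[R] B) (hω : IsParityOp (ZMod (2*m)) (sigmaM m) B ℬ ω)
    (Φ Ψ : A →ₐ[R] B)
    (hΦ : IsDGAHom R (ZMod (2*m)) A B 𝒜 dA ℬ dB Φ) (hΦpt : μ.comp Φ = ε)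
    (hΨ : IsDGAHom R (ZMod (2*m)) A B 𝒜 dA ℬ dB Ψ) (hΨpt : μ.comp Ψ = ε)
    (H : A →ₐ[R] PathC R B ω)
    (hH : IsHomotopy (ZMod (2*m)) A B 𝒜 dA ε ℬ dB μ ω Φ Ψ H) :
    ∀ x ∈ augKer R A ε, dA x ∈ augKerSq R A ε →
      ∃ b ∈ augKer R B μ, Φ x - Ψ x - dB b ∈ augKerSq R B μ :=
  homotopic_maps_linearized_equal_general R m A B 𝒜 dA ℬ dB hB ε μ hμ ω hω Φ Ψ H hH
end

section
/- Let B be a cdg-algebra over a ℚ-algebra R and let A → B and A' → B be surjective quasi-isomorphisms from Sullivan cdg-algebras A and A'. Then there exists a quasi-isomorphism A' → A of cdg-algebras making the triangle over B commute; in particular the Sullivan replacement of B is unique up to quasi-isomorphism. -/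
set_option linter.unusedSectionVars false
set_option linter.unnecessarySeqFocus false
set_option maxHeartbeats 800000

/-!
A Sullivan algebra `A'` is cofibrant: an algebra map out of it is fixed by the images of its
generators, which can be chosen by well-founded recursion along the filtration. Once the
generators below `g s` have been sent to elements compatible with `π'`, the algebra map `F` they
determine commutes with the differentials on the subalgebra they generate, which contains
`d (g s)`. Hence `F (d (g s))` is a cycle whose image under `π` is the boundary
`d (π' (g s))`; since `π` is a surjective quasi-isomorphism it is `d x` for a homogeneous `x`
with `π x = π' (g s)`, and `g s ↦ x` continues the recursion. The resulting `θ` commutes with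
the differentials, satisfies `π ∘ θ = π'`, and is a quasi-isomorphism by two-out-of-three.
-/

attribute [instance] SullivanStruct.linOrd

theorem WellFounded.exists_forall_of_step {α : Type*} {X : α → Type*} [∀ a, Nonempty (X a)]
    {r : α → α → Prop} (hr : WellFounded r) (P : (∀ a, X a) → ∀ a, X a → Prop)
    (hlocal : ∀ f f' a v, (∀ b, r b a → f b = f' b) → P f a v → P f' a v)
    (hstep : ∀ f a, (∀ b, r b a → P f b (f b)) → ∃ v, P f a v) :
    ∃ f : ∀ a, X a, ∀ a, P f a (f a) := by
  -- By `hlocal`, a value working for one family agreeing with `rec` below `a` works for all.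
  let body : ∀ a, (∀ b, r b a → X b) → X a := fun a rec =>
    Classical.epsilon fun v => ∀ f : ∀ a, X a, (∀ b hb, f b = rec b hb) → P f a v
  refine ⟨hr.fix body, fun a => hr.induction (C := fun a => P (hr.fix body) a (hr.fix body a)) a
    fun a ih => ?_⟩
  have hfix : hr.fix body a = body a (fun b _ => hr.fix body b) := hr.fix_eq _ _
  obtain ⟨v, hv⟩ := hstep _ a ih
  rw [hfix]
  exact Classical.epsilon_spec (p := fun v => ∀ f : ∀ a, X a,
    (∀ b (_ : r b a), f b = hr.fix body b) → P f a v)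
    ⟨v, fun f hf => hlocal _ f a v (fun b hb => (hf b hb).symm) hv⟩ _ fun _ _ => rfl

namespace DirectSum

variable {ι M N σM σN : Type*} [DecidableEq ι] [AddCommMonoid M] [AddCommMonoid N]
  [SetLike σM M] [AddSubmonoidClass σM M] [SetLike σN N] [AddSubmonoidClass σN N]
  {ℳ : ι → σM} {𝒩 : ι → σN} [Decomposition ℳ] [Decomposition 𝒩]

theorem coe_decompose_map {F : Type*} [FunLike F M N] [AddMonoidHomClass F M N] (Ψ : F)
    {τ : ι → ι} (hτ : Function.Injective τ) (hΨ : ∀ ⦃i x⦄, x ∈ ℳ i → Ψ x ∈ 𝒩 (τ i))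
    (x : M) (i : ι) : (decompose 𝒩 (Ψ x) (τ i) : N) = Ψ (decompose ℳ x i) := by
  induction x using Decomposition.inductionOn ℳ with
  | zero => simp
  | @homogeneous j m =>
    by_cases hij : i = j
    · subst hij
      rw [decompose_of_mem_same _ (hΨ m.2), decompose_coe, of_eq_same]
    · rw [decompose_of_mem_ne _ (hΨ m.2) (hτ.ne (Ne.symm hij)), decompose_coe,
        of_eq_of_ne _ _ _ hij, ZeroMemClass.coe_zero, map_zero]
  | add m m' hm hm' =>
    simp only [map_add, decompose_add, add_apply, AddMemClass.coe_add, hm, hm']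

end DirectSum

theorem DirectSum.IsInternal.comap_of_injective {R ι M N : Type*} [Ring R] [DecidableEq ι]
    [AddCommGroup M] [Module R M] [AddCommGroup N] [Module R N] {𝒜 : ι → Submodule R M}
    (h : DirectSum.IsInternal 𝒜) {v : N →ₗ[R] M} (hv : Function.Injective v)
    (hspan : Submodule.span R {y | ∃ i, v y ∈ 𝒜 i} = ⊤) :
    DirectSum.IsInternal fun i => (𝒜 i).comap v := by
  refine (DirectSum.isInternal_submodule_iff_iSupIndep_and_iSup_eq_top
    fun i => (𝒜 i).comap v).mpr ⟨?_, ?_⟩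
  · refine fun i => Submodule.disjoint_def.mpr fun x hxi hx => hv ?_
    have hmap : ((⨆ j, ⨆ _ : j ≠ i, (𝒜 j).comap v).map v) ≤ ⨆ j, ⨆ _ : j ≠ i, 𝒜 j := by
      simp only [Submodule.map_iSup]
      exact iSup₂_mono fun j _ => Submodule.map_comap_le _ _
    rw [map_zero]
    exact Submodule.disjoint_def.mp (h.submodule_iSupIndep i) _ hxi (hmap ⟨x, hx, rfl⟩)
  · rw [eq_top_iff, ← hspan, Submodule.span_le]
    rintro y ⟨i, hy⟩
    exact Submodule.mem_iSup_of_mem i hy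

theorem SetLike.span_isHomogeneousElem_eq_top {R A ι : Type*} [CommSemiring R] [Semiring A]
    [Algebra R A] [AddMonoid ι] {𝒜 : ι → Submodule R A} [SetLike.GradedMonoid 𝒜] {s : Set A}
    (hs : ∀ x ∈ s, SetLike.IsHomogeneousElem 𝒜 x) (htop : Algebra.adjoin R s = ⊤) :
    Submodule.span R {x | SetLike.IsHomogeneousElem 𝒜 x} = ⊤ := by
  have hclosure : Submonoid.closure s ≤ SetLike.homogeneousSubmonoid 𝒜 :=
    Submonoid.closure_le.mpr hs
  rw [eq_top_iff, ← Algebra.toSubmodule_eq_top.mpr htop, Algebra.adjoin_eq_span]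
  exact Submodule.span_mono hclosure

namespace IsQuasiIso

variable {R : Type} [CommRing R] {A A' B : Type} [AddCommGroup A] [Module R A]
  [AddCommGroup A'] [Module R A'] [AddCommGroup B] [Module R B]
  {dA : A →ₗ[R] A} {dA' : A' →ₗ[R] A'} {dB : B →ₗ[R] B}
  {F : Type*} [FunLike F A B] [AddMonoidHomClass F A B] {π : F}

theorem exists_lift (hπq : IsQuasiIso R A B dA dB π) (hd2 : ∀ x, dA (dA x) = 0)
    (hπd : ∀ x, π (dA x) = dB (π x)) (hπs : Function.Surjective π)
    {z : A} {b : B} (hz : dA z = 0) (hb : π z = dB b) : ∃ x, dA x = z ∧ π x = b := by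
  obtain ⟨a, rfl⟩ := hπq.2 z hz ⟨b, hb⟩
  have hcycle : dB (π a - b) = 0 := by rw [map_sub, ← hπd, hb, sub_self]
  obtain ⟨c, hc, b', hb'⟩ := hπq.1 _ hcycle
  obtain ⟨a', rfl⟩ := hπs b'
  refine ⟨a - c + dA a', ?_, ?_⟩
  · rw [map_add, map_sub, hc, hd2, sub_zero, add_zero]
  · rw [map_add, map_sub, hb', hπd]
    abel

theorem exists_homogeneous_lift {ι : Type*} [DecidableEq ι] [AddGroupWithOne ι]
    {𝒜 : ι → Submodule R A} {ℬ : ι → Submodule R B}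
    (hπq : IsQuasiIso R A B dA dB π) (hAint : DirectSum.IsInternal 𝒜)
    (hBint : DirectSum.IsInternal ℬ) (hd : ∀ ⦃i x⦄, x ∈ 𝒜 i → dA x ∈ 𝒜 (i + 1))
    (hπ : ∀ ⦃i x⦄, x ∈ 𝒜 i → π x ∈ ℬ i) (hd2 : ∀ x, dA (dA x) = 0)
    (hπd : ∀ x, π (dA x) = dB (π x)) (hπs : Function.Surjective π)
    {i : ι} {z : A} {b : B} (hzi : z ∈ 𝒜 (i + 1)) (hbi : b ∈ ℬ i)
    (hz : dA z = 0) (hb : π z = dB b) : ∃ x ∈ 𝒜 i, dA x = z ∧ π x = b := by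
  let _ : DirectSum.Decomposition 𝒜 := hAint.chooseDecomposition
  let _ : DirectSum.Decomposition ℬ := hBint.chooseDecomposition
  obtain ⟨x, rfl, rfl⟩ := hπq.exists_lift hd2 hπd hπs hz hb
  refine ⟨DirectSum.decompose 𝒜 x i, SetLike.coe_mem _, ?_, ?_⟩
  · rw [← DirectSum.coe_decompose_map dA (add_left_injective 1) hd,
      DirectSum.decompose_of_mem_same _ hzi]
  · exact (DirectSum.coe_decompose_map π Function.injective_id hπ x i).symm.trans
      (DirectSum.decompose_of_mem_same _ hbi)

variable {G : Type*} [FunLike G A' A] [AddMonoidHomClass G A' A] {θ : G}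

theorem of_comp (hπq : IsQuasiIso R A B dA dB π) (hθd : ∀ x, θ (dA' x) = dA (θ x))
    (hπd : ∀ x, π (dA x) = dB (π x)) (hcomp : IsQuasiIso R A' B dA' dB (π ∘ θ)) :
    IsQuasiIso R A' A dA' dA θ := by
  refine ⟨fun y hy => ?_, fun x hx ⟨a, ha⟩ => hcomp.2 x hx ⟨π a, ?_⟩⟩
  · obtain ⟨x, hx, b, hb⟩ := hcomp.1 (π y) (by rw [← hπd, hy, map_zero])
    have hcycle : dA (θ x - y) = 0 := by rw [map_sub, ← hθd, hx, hy, map_zero, sub_zero]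
    have hb' : π (θ x) = π y + dB b := hb
    obtain ⟨a, ha⟩ := hπq.2 _ hcycle ⟨b, by rw [map_sub, hb', add_sub_cancel_left]⟩
    exact ⟨x, hx, a, by rw [← ha]; abel⟩
  · rw [Function.comp_apply, ha, hπd]

end IsQuasiIso

section Graded

variable {R : Type} [CommRing R] {ι : Type} [CommRing ι] [DecidableEq ι]
  {σ : ι →+ ZMod 2}
variable {A : Type} [Ring A] [Algebra R A] {𝒜 : ι → Submodule R A}

theorem IsGCAlg.adjoin (h : IsGCAlg R ι σ A 𝒜) {s : Set A}
    (hs : ∀ x ∈ s, SetLike.IsHomogeneousElem 𝒜 x) :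
    IsGCAlg R ι σ (Algebra.adjoin R s)
      (fun i => (𝒜 i).comap (Algebra.adjoin R s).val.toLinearMap) where
  one_mem := h.one_mem
  mul_mem _ _ _ _ hx hy := h.mul_mem hx hy
  internal := by
    let 𝒞 := fun i => (𝒜 i).comap (Algebra.adjoin R s).val.toLinearMap
    have : SetLike.GradedMonoid 𝒞 :=
      { one_mem := h.one_mem, mul_mem := @fun _ _ _ _ hx hy => h.mul_mem hx hy }
    have hspan : Submodule.span R {x | SetLike.IsHomogeneousElem 𝒞 x} = ⊤ :=
      SetLike.span_isHomogeneousElem_eq_top (s := Subtype.val ⁻¹' s) (fun x hx => hs x hx)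
        Algebra.adjoin_adjoin_coe_preimage
    exact h.internal.comap_of_injective Subtype.val_injective hspan
  gcomm i j x y hx hy := by
    have := h.gcomm hx hy
    split_ifs at this ⊢ <;> exact Subtype.ext this

variable {d : A →ₗ[R] A} {A' : Type} [Ring A'] [Algebra R A'] {𝒜' : ι → Submodule R A'}
  {d' : A' →ₗ[R] A'}

theorem IsCDGA.d_one (h : IsCDGA R ι σ A 𝒜 d) : d 1 = 0 := by
  have hσ : σ 0 ≠ 1 := by rw [map_zero]; decide
  have h1 := h.leibniz h.toIsGCAlg.one_mem 1
  rw [if_neg hσ, one_mul, mul_one, one_mul] at h1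
  exact left_eq_add.mp h1

theorem IsCDGA.map_d_eq_of_mem_adjoin (hA : IsCDGA R ι σ A 𝒜 d)
    (hA' : IsCDGA R ι σ A' 𝒜' d')
    (F : A' →ₐ[R] A) (hF : ∀ ⦃i x⦄, x ∈ 𝒜' i → F x ∈ 𝒜 i) {s : Set A'}
    (hs : ∀ x ∈ s, SetLike.IsHomogeneousElem 𝒜' x) (hFs : ∀ x ∈ s, F (d' x) = d (F x))
    {y : A'} (hy : y ∈ Algebra.adjoin R s) : F (d' y) = d (F y) := by
  have hmonomial : ∀ y ∈ Submonoid.closure s, F (d' y) = d (F y) := by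
    intro y hy
    induction hy using Submonoid.closure_induction_left with
    | one => rw [hA'.d_one, map_zero, map_one, hA.d_one]
    | mul_left x hx y _ ih =>
      obtain ⟨i, hxi⟩ := hs x hx
      rw [hA'.leibniz hxi, map_mul, hA.leibniz (hF hxi), ← hFs x hx, ← ih]
      split_ifs <;> simp only [map_add, map_neg, map_mul]
  rw [← Subalgebra.mem_toSubmodule, Algebra.adjoin_eq_span] at hy
  induction hy using Submodule.span_induction with
  | mem x hx => exact hmonomial x hx
  | zero => simp only [map_zero]
  | add x y _ _ hx hy => simp only [map_add, hx, hy]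
  | smul r x _ hx => simp only [map_smul, hx]

end Graded

namespace SullivanStruct

variable {R : Type} [CommRing R] {ι : Type} [CommRing ι] [DecidableEq ι] {σ : ι →+ ZMod 2}
variable {A : Type} [Ring A] [Algebra R A] {𝒜 : ι → Submodule R A} {dA : A →ₗ[R] A}
variable {B : Type} [Ring B] [Algebra R B] {ℬ : ι → Submodule R B}

section Generators

variable (S : SullivanStruct R ι σ A 𝒜 dA)

noncomputable def lift (hB : IsGCAlg R ι σ B ℬ) (f : ∀ s, ℬ (S.deg s)) : A →ₐ[R] B :=
  (S.free B ℬ hB (fun s => f s) fun s => (f s).2).exists.choose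

theorem lift_mem (hB : IsGCAlg R ι σ B ℬ) (f : ∀ s, ℬ (S.deg s)) :
    ∀ ⦃i x⦄, x ∈ 𝒜 i → S.lift hB f x ∈ ℬ i :=
  (S.free B ℬ hB (fun s => f s) fun s => (f s).2).exists.choose_spec.1

@[simp]
theorem lift_g (hB : IsGCAlg R ι σ B ℬ) (f : ∀ s, ℬ (S.deg s)) (s : S.Gen) :
    S.lift hB f (S.g s) = f s :=
  (S.free B ℬ hB (fun s => f s) fun s => (f s).2).exists.choose_spec.2 s

theorem isHomogeneousElem_g (s : S.Gen) : SetLike.IsHomogeneousElem 𝒜 (S.g s) :=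
  ⟨S.deg s, S.g_mem s⟩

theorem adjoin_range_g (hA : IsGCAlg R ι σ A 𝒜) : Algebra.adjoin R (Set.range S.g) = ⊤ := by
  let C := Algebra.adjoin R (Set.range S.g)
  have hC := hA.adjoin (s := Set.range S.g) (by rintro _ ⟨s, rfl⟩; exact S.isHomogeneousElem_g s)
  obtain ⟨G, ⟨hGmem, hGg⟩, -⟩ :=
    S.free C _ hC (fun s => ⟨S.g s, Algebra.subset_adjoin ⟨s, rfl⟩⟩) S.g_mem
  have hid : C.val.comp G = AlgHom.id R A :=
    (S.free A 𝒜 hA S.g S.g_mem).unique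
      ⟨fun _ _ hx => hGmem hx, fun s => congrArg Subtype.val (hGg s)⟩
      ⟨fun _ _ hx => hx, fun _ => rfl⟩
  refine eq_top_iff.mpr fun x _ => ?_
  rw [← AlgHom.id_apply (R := R) x, ← hid]
  exact (G x).2

theorem algHom_ext (hA : IsGCAlg R ι σ A 𝒜) {φ ψ : A →ₐ[R] B}
    (h : ∀ s, φ (S.g s) = ψ (S.g s)) : φ = ψ :=
  AlgHom.ext_of_adjoin_eq_top (S.adjoin_range_g hA) (by rintro _ ⟨s, rfl⟩; exact h s)

theorem apply_d_g_eq {φ ψ : A →ₐ[R] B} {s : S.Gen}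
    (h : ∀ t, S.idx t < S.idx s → φ (S.g t) = ψ (S.g t)) : φ (dA (S.g s)) = ψ (dA (S.g s)) :=
  AlgHom.eqOn_adjoin_iff.mpr (by rintro _ ⟨t, ht, rfl⟩; exact h t ht) (S.filt s)

end Generators

variable {A' : Type} [Ring A'] [Algebra R A'] {𝒜' : ι → Submodule R A'} {dA' : A' →ₗ[R] A'}
  {dB : B →ₗ[R] B} {π : A →ₐ[R] B} {π' : A' →ₐ[R] B}

theorem exists_generator_images (S : SullivanStruct R ι σ A' 𝒜' dA')
    (hA : IsCDGA R ι σ A 𝒜 dA) (hA' : IsCDGA R ι σ A' 𝒜' dA') (hBint : DirectSum.IsInternal ℬ)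
    (hπ : IsDGAHom R ι A B 𝒜 dA ℬ dB π) (hπs : Function.Surjective π)
    (hπq : IsQuasiIso R A B dA dB π) (hπ' : IsDGAHom R ι A' B 𝒜' dA' ℬ dB π') :
    ∃ f : ∀ s, 𝒜 (S.deg s),
      ∀ s, π (f s) = π' (S.g s) ∧ dA (f s) = S.lift hA.toIsGCAlg f (dA' (S.g s)) := by
  refine (InvImage.wf S.idx S.wf).exists_forall_of_step
    (fun (f : ∀ s, 𝒜 (S.deg s)) s (v : 𝒜 (S.deg s)) =>
      π v = π' (S.g s) ∧ dA v = S.lift hA.toIsGCAlg f (dA' (S.g s))) ?_ ?_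
  · rintro f f' s v hff' ⟨hπv, hdv⟩
    exact ⟨hπv, hdv.trans (S.apply_d_g_eq fun t ht => by simp only [lift_g, hff' t ht])⟩
  · intro f s ih
    set F := S.lift hA.toIsGCAlg f
    have hFd : ∀ y ∈ Algebra.adjoin R (S.g '' {t | S.idx t < S.idx s}), F (dA' y) = dA (F y) :=
      fun y hy => hA.map_d_eq_of_mem_adjoin hA' F (S.lift_mem _ f)
        (by rintro _ ⟨t, -, rfl⟩; exact S.isHomogeneousElem_g t)
        (by rintro _ ⟨t, ht, rfl⟩; rw [S.lift_g, (ih t ht).2]) hy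
    have hcycle : dA (F (dA' (S.g s))) = 0 := by
      rw [← hFd _ (S.filt s), hA'.d_sq, map_zero]
    have hπF : π (F (dA' (S.g s))) = dB (π' (S.g s)) := by
      rw [← hπ'.comm_d]
      exact S.apply_d_g_eq (φ := π.comp F) fun t ht => by
        simp only [AlgHom.comp_apply, F, lift_g, (ih t ht).1]
    obtain ⟨x, hx, hdx, hπx⟩ := hπq.exists_homogeneous_lift hA.toIsGCAlg.internal hBint
      hA.d_mem hπ.grade hA.d_sq hπ.comm_d hπs (S.lift_mem _ f (hA'.d_mem (S.g_mem s)))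
      (hπ'.grade (S.g_mem s)) hcycle hπF
    exact ⟨⟨x, hx⟩, hπx, hdx⟩

theorem exists_dgaHom_lift (S : SullivanStruct R ι σ A' 𝒜' dA')
    (hA : IsCDGA R ι σ A 𝒜 dA) (hA' : IsCDGA R ι σ A' 𝒜' dA') (hBint : DirectSum.IsInternal ℬ)
    (hπ : IsDGAHom R ι A B 𝒜 dA ℬ dB π) (hπs : Function.Surjective π)
    (hπq : IsQuasiIso R A B dA dB π) (hπ' : IsDGAHom R ι A' B 𝒜' dA' ℬ dB π') :
    ∃ θ : A' →ₐ[R] A, IsDGAHom R ι A' A 𝒜' dA' 𝒜 dA θ ∧ π.comp θ = π' := by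
  obtain ⟨f, hf⟩ := S.exists_generator_images hA hA' hBint hπ hπs hπq hπ'
  set θ := S.lift hA.toIsGCAlg f
  have hθd : ∀ x, θ (dA' x) = dA (θ x) := fun x =>
    hA.map_d_eq_of_mem_adjoin hA' θ (S.lift_mem _ f) (s := Set.range S.g)
      (by rintro _ ⟨s, rfl⟩; exact S.isHomogeneousElem_g s)
      (by rintro _ ⟨s, rfl⟩; rw [S.lift_g, (hf s).2])
      (by rw [S.adjoin_range_g hA'.toIsGCAlg]; trivial)
  exact ⟨θ, ⟨S.lift_mem _ f, hθd⟩, S.algHom_ext hA'.toIsGCAlg fun s => by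
    simp only [AlgHom.comp_apply, θ, lift_g, (hf s).1]⟩

end SullivanStruct

theorem sullivan_replacement_unique_general
    (R : Type) [CommRing R] [Algebra ℚ R] (m : ℕ)
    (B : Type) [Ring B] [Algebra R B]
    (ℬ : ZMod (2*m) → Submodule R B) (dB : B →ₗ[R] B)
    (hB : IsCDGA R (ZMod (2*m)) (sigmaM m) B ℬ dB)
    (A : Type) [Ring A] [Algebra R A]
    (𝒜 : ZMod (2*m) → Submodule R A) (dA : A →ₗ[R] A)
    (hA : IsCDGA R (ZMod (2*m)) (sigmaM m) A 𝒜 dA)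
    (A' : Type) [Ring A'] [Algebra R A']
    (𝒜' : ZMod (2*m) → Submodule R A') (dA' : A' →ₗ[R] A')
    (hA' : IsCDGA R (ZMod (2*m)) (sigmaM m) A' 𝒜' dA')
    (hSA' : IsSullivan R (ZMod (2*m)) (sigmaM m) A' 𝒜' dA')
    (π : A →ₐ[R] B) (hπ : IsDGAHom R (ZMod (2*m)) A B 𝒜 dA ℬ dB π)
    (hπs : Function.Surjective π) (hπq : IsQuasiIso R A B dA dB π)
    (π' : A' →ₐ[R] B) (hπ' : IsDGAHom R (ZMod (2*m)) A' B 𝒜' dA' ℬ dB π')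
    (hπ'q : IsQuasiIso R A' B dA' dB π') :
    ∃ θ : A' →ₐ[R] A, IsDGAHom R (ZMod (2*m)) A' A 𝒜' dA' 𝒜 dA θ ∧
      IsQuasiIso R A' A dA' dA θ ∧ π.comp θ = π' := by
  obtain ⟨S⟩ := hSA'
  obtain ⟨θ, hθ, hπθ⟩ :=
    S.exists_dgaHom_lift hA hA' hB.toIsGCAlg.internal hπ hπs hπq hπ'
  have hπθq : IsQuasiIso R A' B dA' dB (π ∘ θ) := by rwa [← hπθ] at hπ'q
  exact ⟨θ, hθ, hπq.of_comp hθ.comm_d hπ.comm_d hπθq, hπθ⟩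

theorem sullivan_replacement_unique
    (R : Type) [CommRing R] [Algebra ℚ R] (m : ℕ)
    (B : Type) [Ring B] [Algebra R B]
    (ℬ : ZMod (2*m) → Submodule R B) (dB : B →ₗ[R] B)
    (hB : IsCDGA R (ZMod (2*m)) (sigmaM m) B ℬ dB)
    (A : Type) [Ring A] [Algebra R A]
    (𝒜 : ZMod (2*m) → Submodule R A) (dA : A →ₗ[R] A)
    (hA : IsCDGA R (ZMod (2*m)) (sigmaM m) A 𝒜 dA)
    (hSA : IsSullivan R (ZMod (2*m)) (sigmaM m) A 𝒜 dA)
    (A' : Type) [Ring A'] [Algebra R A']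
    (𝒜' : ZMod (2*m) → Submodule R A') (dA' : A' →ₗ[R] A')
    (hA' : IsCDGA R (ZMod (2*m)) (sigmaM m) A' 𝒜' dA')
    (hSA' : IsSullivan R (ZMod (2*m)) (sigmaM m) A' 𝒜' dA')
    (π : A →ₐ[R] B) (hπ : IsDGAHom R (ZMod (2*m)) A B 𝒜 dA ℬ dB π)
    (hπs : Function.Surjective π) (hπq : IsQuasiIso R A B dA dB π)
    (π' : A' →ₐ[R] B) (hπ' : IsDGAHom R (ZMod (2*m)) A' B 𝒜' dA' ℬ dB π')
    (hπ's : Function.Surjective π') (hπ'q : IsQuasiIso R A' B dA' dB π') :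
    ∃ θ : A' →ₐ[R] A, IsDGAHom R (ZMod (2*m)) A' A 𝒜' dA' 𝒜 dA θ ∧
      IsQuasiIso R A' A dA' dA θ ∧ π.comp θ = π' :=
  sullivan_replacement_unique_general R m B ℬ dB hB A 𝒜 dA hA A' 𝒜' dA' hA' hSA' π hπ hπs hπq π' hπ'
    hπ'q
end
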